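/- If a finite sum Σ_l Q_l(|z₁|²,...,|z_n|²) · M_l is harmonic on ℝ^{2n} ≅ ℂ^n, where the M_l are pairwise distinct monomials of the form ∏_j z_{σ(j)}^{c_j^l} (each coordinate appearing either as z_j or z̄_j but not both) and each Q_l is a complex polynomial in n variables, then each summand Q_l(|z₁|²,...,|z_n|²) · M_l is harmonic. -/

import Mathlib

/-!
Grade polynomials in `z, z̄` by the character lattice `ℤⁿ` of the torus `(S¹)ⁿ`, giving `z_j`
weight `e_j` and `z̄_j` weight `-e_j`. Each `|z_j|² = z_j z̄_j` has weight `0`, so the `l`-th summand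
is homogeneous of weight the signed exponent vector of `M_l`. Each `∂_{z_j} ∂_{z̄_j}` lowers the
weight by `e_j - e_j = 0`, so the Laplacian maps the summands to homogeneous polynomials of
pairwise distinct weights; as these sum to zero, each of them is zero.
-/

open MvPolynomial

/- We identify polynomials on `ℝ^{2n} ≅ ℂⁿ` with formal polynomials in the `2n`
variables `z₁,…,zₙ, z̄₁,…,z̄ₙ`, indexed by `Fin n ⊕ Fin n` (`inl j ↦ z_j`,
`inr j ↦ z̄_j`).  In these coordinates the Euclidean Laplacian is (four times)
`∑_j ∂_{z_j} ∂_{z̄_j}`, and `|z_j|² = z_j z̄_j`. -/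

/-- The Laplacian `∑_j ∂_{z_j} ∂_{z̄_j}` in complex coordinates (harmonicity on `ℝ^{2n}`
is equivalent to being annihilated by this operator). -/
noncomputable def cxLaplacian (n : ℕ) :
    MvPolynomial (Fin n ⊕ Fin n) ℂ →ₗ[ℂ] MvPolynomial (Fin n ⊕ Fin n) ℂ :=
  ∑ j : Fin n, (pderiv (Sum.inl j)).toLinearMap ∘ₗ (pderiv (Sum.inr j)).toLinearMap

/-- The monomial `∏_j z_{σ(j)}^{c_j}`, where `σ(j)` is `z̄_j` if `ε j` and `z_j`
otherwise. -/
noncomputable def sigmaMonomial (n : ℕ) (c : Fin n → ℕ) (ε : Fin n → Bool) :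
    MvPolynomial (Fin n ⊕ Fin n) ℂ :=
  ∏ j : Fin n, X (if ε j then Sum.inr j else Sum.inl j) ^ c j

/-- The summand `Q(|z₁|²,…,|zₙ|²) · ∏_j z_{σ(j)}^{c_j}`. -/
noncomputable def radialSummand (n : ℕ) (Q : MvPolynomial (Fin n) ℂ) (c : Fin n → ℕ)
    (ε : Fin n → Bool) : MvPolynomial (Fin n ⊕ Fin n) ℂ :=
  (aeval (fun j : Fin n => X (Sum.inl j) * X (Sum.inr j)) Q) * sigmaMonomial n c ε

namespace MvPolynomial

variable {R σ M : Type*} [CommSemiring R]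

lemma isWeightedHomogeneous_aeval_of_weight_zero [AddCommMonoid M] {τ : Type*} {w : σ → M}
    {f : τ → MvPolynomial σ R} (hf : ∀ j, (f j).IsWeightedHomogeneous w 0)
    (Q : MvPolynomial τ R) : (aeval f Q).IsWeightedHomogeneous w 0 := by
  induction Q using MvPolynomial.induction_on with
  | C a => rw [aeval_C]; exact isWeightedHomogeneous_C w _
  | add p q hp hq => rw [map_add]; exact hp.add hq
  | mul_X p j hp => rw [map_mul, aeval_X, ← zero_add 0]; exact hp.mul (hf j)

lemma IsWeightedHomogeneous.eq_zero_of_sum_eq_zero [AddCommMonoid M] {ι : Type*} {w : σ → M}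
    {s : Finset ι} {p : ι → MvPolynomial σ R} {m : ι → M} (hm : Set.InjOn m s)
    (hp : ∀ i ∈ s, (p i).IsWeightedHomogeneous w (m i)) (hsum : ∑ i ∈ s, p i = 0) :
    ∀ i ∈ s, p i = 0 := by
  classical
  intro i hi
  have hcomp := congrArg (weightedHomogeneousComponent w (m i)) hsum
  rwa [map_sum, map_zero, Finset.sum_eq_single_of_mem i hi
      (fun k hk hki => (hp k hk).weightedHomogeneousComponent_ne _
        fun hmk => hki (hm hk hi hmk.symm)),
    (hp i hi).weightedHomogeneousComponent_same] at hcomp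

end MvPolynomial

section TorusGrading

variable {n : ℕ}

noncomputable def torusWeight (n : ℕ) : Fin n ⊕ Fin n → Fin n → ℤ :=
  Sum.elim (fun j => Pi.single j 1) (fun j => -Pi.single j 1)

def signedExponent (c : Fin n → ℕ) (ε : Fin n → Bool) : Fin n → ℤ :=
  fun j => if ε j then -(c j : ℤ) else (c j : ℤ)

lemma torusWeight_inl_add_inr (j : Fin n) :
    torusWeight n (Sum.inl j) + torusWeight n (Sum.inr j) = 0 := by
  simp [torusWeight]

lemma MvPolynomial.IsWeightedHomogeneous.cxLaplacian {M : Type*} [AddCancelCommMonoid M]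
    {w : Fin n ⊕ Fin n → M} (hw : ∀ j, w (Sum.inl j) + w (Sum.inr j) = 0)
    {p : MvPolynomial (Fin n ⊕ Fin n) ℂ} {m : M} (hp : p.IsWeightedHomogeneous w m) :
    (cxLaplacian n p).IsWeightedHomogeneous w m := by
  rw [_root_.cxLaplacian, LinearMap.sum_apply]
  refine IsWeightedHomogeneous.sum _ _ _ fun j _ => ?_
  have hinr : (pderiv (Sum.inr j) p).IsWeightedHomogeneous w (m + w (Sum.inl j)) :=
    hp.pderiv (by rw [add_assoc, hw, add_zero])
  exact hinr.pderiv rfl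

lemma isWeightedHomogeneous_sigmaMonomial (c : Fin n → ℕ) (ε : Fin n → Bool) :
    (sigmaMonomial n c ε).IsWeightedHomogeneous (torusWeight n) (signedExponent c ε) := by
  have hweight : ∀ j, c j • torusWeight n (if ε j then Sum.inr j else Sum.inl j) =
      Pi.single j (signedExponent c ε j) := by
    intro j
    cases hε : ε j <;> simp [torusWeight, signedExponent, hε, ← Pi.single_smul, Pi.single_neg]
  rw [← Finset.univ_sum_single (signedExponent c ε)]
  simp_rw [← hweight]
  exact IsWeightedHomogeneous.prod _ _ _ fun j _ => (isWeightedHomogeneous_X ℂ _ _).pow _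

lemma isWeightedHomogeneous_radialSummand (Q : MvPolynomial (Fin n) ℂ) (c : Fin n → ℕ)
    (ε : Fin n → Bool) :
    (radialSummand n Q c ε).IsWeightedHomogeneous (torusWeight n) (signedExponent c ε) := by
  have hnormSq : ∀ j, IsWeightedHomogeneous (torusWeight n)
      (X (Sum.inl j) * X (Sum.inr j) : MvPolynomial (Fin n ⊕ Fin n) ℂ) 0 := fun j => by
    rw [← torusWeight_inl_add_inr j]
    exact (isWeightedHomogeneous_X ℂ _ _).mul (isWeightedHomogeneous_X ℂ _ _)
  have hradial := isWeightedHomogeneous_aeval_of_weight_zero hnormSq Q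
  rw [radialSummand, ← zero_add (signedExponent c ε)]
  exact hradial.mul (isWeightedHomogeneous_sigmaMonomial c ε)

end TorusGrading

/-- if a finite sum `Σ_l Q_l(|z₁|²,…,|zₙ|²)·M_l` is harmonic, where the `M_l`
are pairwise distinct monomials `∏_j z_{σ(j)}^{c_j^l}` (distinct as torus characters,
i.e. the signed exponent vectors differ), then each summand is harmonic. -/
theorem summands_of_harmonic_sum_are_harmonic (n L : ℕ)
    (Q : Fin L → MvPolynomial (Fin n) ℂ)
    (c : Fin L → Fin n → ℕ) (ε : Fin L → Fin n → Bool)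
    (hdist : Function.Injective fun l : Fin L =>
      (fun j : Fin n => if ε l j then -(c l j : ℤ) else (c l j : ℤ)))
    (h : cxLaplacian n (∑ l : Fin L, radialSummand n (Q l) (c l) (ε l)) = 0) :
    ∀ l : Fin L, cxLaplacian n (radialSummand n (Q l) (c l) (ε l)) = 0 := by
  have hhom : ∀ l ∈ Finset.univ, IsWeightedHomogeneous (torusWeight n)
      (cxLaplacian n (radialSummand n (Q l) (c l) (ε l))) (signedExponent (c l) (ε l)) := fun l _ =>
    (isWeightedHomogeneous_radialSummand (Q l) (c l) (ε l)).cxLaplacian torusWeight_inl_add_inr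
  rw [map_sum] at h
  exact fun l => IsWeightedHomogeneous.eq_zero_of_sum_eq_zero hdist.injOn hhom h l
    (Finset.mem_univ l)
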